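/- On the product of two metric cones (M̄₁ × M̄₂, ḡ₁ + ḡ₂) with ḡ₁ = λs₁²g₁ + ds₁² and ḡ₂ = λs₂²g₂ − ds₂², the coordinate change t = λ^{1/2}(s₁+s₂)/2, ρ = 2(s₁−s₂)/(λ(s₁+s₂)), with μ = λ/2, transforms the product metric ds₁² − ds₂² + λs₁²g₁ + λs₂²g₂ into 2t dt dρ + 2ρ dt² + t²[(1+μρ)²g₁ + (1−μρ)²g₂]. -/

import Mathlib

noncomputable section

/-- The coordinate change `(t,ρ) ↦ (s₁,s₂)` with
`s₁ = (2μ)^{-1/2} t (1+μρ)` and `s₂ = (2μ)^{-1/2} t (1−μρ)`. -/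
def coneCoords (μ : ℝ) : ℝ × ℝ → ℝ × ℝ :=
  fun p => ((Real.sqrt (2 * μ))⁻¹ * p.1 * (1 + μ * p.2),
            (Real.sqrt (2 * μ))⁻¹ * p.1 * (1 - μ * p.2))

/-- substituting `s₁ = (2μ)^{-1/2} t(1+μρ)`, `s₂ = (2μ)^{-1/2} t(1−μρ)`
(with `μ = λ/2 > 0`) into the product-of-cones metric
`ds₁² − ds₂² + λ s₁² g₁ + λ s₂² g₂` yields
`2t dt dρ + 2ρ dt² + t²[(1+μρ)² g₁ + (1−μρ)² g₂]`.
Concretely: the pulled-back quadratic form `ds₁² − ds₂²` in the `(t,ρ)` variables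
agrees with `2t dt dρ + 2ρ dt²`, and the conformal factors match:
`λ s₁² = t²(1+μρ)²` and `λ s₂² = t²(1−μρ)²`. -/
theorem cone_product_to_fg_form (lam μ : ℝ) (hlam : 0 < lam) (hμ : μ = lam / 2)
    (t ρ : ℝ) (ht : 0 < t) (h₁ : 0 < 1 + μ * ρ) (h₂ : 0 < 1 - μ * ρ) :
    (∀ v w : ℝ × ℝ,
        (fderiv ℝ (coneCoords μ) (t, ρ) v).1 * (fderiv ℝ (coneCoords μ) (t, ρ) w).1
          - (fderiv ℝ (coneCoords μ) (t, ρ) v).2 * (fderiv ℝ (coneCoords μ) (t, ρ) w).2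
        = t * (v.1 * w.2 + v.2 * w.1) + 2 * ρ * (v.1 * w.1)) ∧
    lam * (coneCoords μ (t, ρ)).1 ^ 2 = t ^ 2 * (1 + μ * ρ) ^ 2 ∧
    lam * (coneCoords μ (t, ρ)).2 ^ 2 = t ^ 2 * (1 - μ * ρ) ^ 2 := by
  have hμ0 : 0 < μ := by rw [hμ]; linarith
  set c : ℝ := (Real.sqrt (2 * μ))⁻¹ with hc
  have hcc : c * c = (2 * μ)⁻¹ := by
    rw [hc, ← mul_inv, Real.mul_self_sqrt (by linarith)]
  have hf1 : HasFDerivAt (fun p : ℝ × ℝ => c * p.1 * (1 + μ * p.2))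
      ((c * t) • ((μ : ℝ) • ContinuousLinearMap.snd ℝ ℝ ℝ)
        + (1 + μ * ρ) • (c • ContinuousLinearMap.fst ℝ ℝ ℝ)) (t, ρ) := by
    have := ((hasFDerivAt_fst (𝕜 := ℝ) (p := ((t, ρ) : ℝ × ℝ))).const_mul c).mul
      ((hasFDerivAt_snd.const_mul μ).const_add 1)
    simpa [Pi.mul_def] using this
  have hf2 : HasFDerivAt (fun p : ℝ × ℝ => c * p.1 * (1 - μ * p.2))
      ((c * t) • (-((μ : ℝ) • ContinuousLinearMap.snd ℝ ℝ ℝ))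
        + (1 - μ * ρ) • (c • ContinuousLinearMap.fst ℝ ℝ ℝ)) (t, ρ) := by
    have := ((hasFDerivAt_fst (𝕜 := ℝ) (p := ((t, ρ) : ℝ × ℝ))).const_mul c).mul
      (((hasFDerivAt_snd.const_mul μ).neg).const_add 1)
    simpa [sub_eq_add_neg, Pi.mul_def] using this
  have hF : HasFDerivAt (coneCoords μ)
      (((c * t) • ((μ : ℝ) • ContinuousLinearMap.snd ℝ ℝ ℝ)
          + (1 + μ * ρ) • (c • ContinuousLinearMap.fst ℝ ℝ ℝ)).prod
        ((c * t) • (-((μ : ℝ) • ContinuousLinearMap.snd ℝ ℝ ℝ))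
          + (1 - μ * ρ) • (c • ContinuousLinearMap.fst ℝ ℝ ℝ))) (t, ρ) := by
    unfold coneCoords; exact HasFDerivAt.prodMk hf1 hf2
  refine ⟨?_, ?_, ?_⟩
  · intro v w
    rw [hF.fderiv]
    simp only [ContinuousLinearMap.prod_apply, ContinuousLinearMap.add_apply,
      ContinuousLinearMap.smul_apply, ContinuousLinearMap.neg_apply,
      ContinuousLinearMap.coe_fst', ContinuousLinearMap.coe_snd', smul_eq_mul]
    have hmul : c * c * (2 * μ) = 1 := by
      rw [hcc]; field_simp
    linear_combination (t * (v.1 * w.2 + v.2 * w.1) + 2 * ρ * (v.1 * w.1)) * hmul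
  · simp only [coneCoords]
    have : lam = 2 * μ := by rw [hμ]; ring
    rw [this]
    have hmul : c * c * (2 * μ) = 1 := by rw [hcc]; field_simp
    linear_combination (t ^ 2 * (1 + μ * ρ) ^ 2) * hmul
  · simp only [coneCoords]
    have : lam = 2 * μ := by rw [hμ]; ring
    rw [this]
    have hmul : c * c * (2 * μ) = 1 := by rw [hcc]; field_simp
    linear_combination (t ^ 2 * (1 - μ * ρ) ^ 2) * hmul
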